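/- Let c > 0 and η ∈ ℝ. Then ∫_0^∞ e^{-ctv} / √|v-η| dv ≲ t^{-1/2} for all t ≥ 1, with implied constant independent of η. -/

import Mathlib

/-!
Split the kernel at distance `δ` from its singularity. Near `η` drop the exponential and
integrate `|v - η| ^ r` exactly, which gives `2 δ ^ (r + 1) / (r + 1)`; away from `η` use
`|v - η| ^ r ≤ δ ^ r` and `∫₀^∞ e^{-a v} dv = 1 / a`. The choice `δ = 1 / a` makes both
terms multiples of `a ^ (-(r + 1))`, uniformly in `η`; for `r = -1/2` and `a = c t` this is the
`t ^ (-1/2)` decay.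
-/

open MeasureTheory Set Real

lemma integral_indicator_Iic_rpow_comp_abs {r δ : ℝ} (hr : -1 < r) (hδ : 0 ≤ δ) :
    ∫ u, (Iic δ).indicator (· ^ r) |u| = 2 * δ ^ (r + 1) / (r + 1) := by
  rw [integral_comp_abs, setIntegral_indicator measurableSet_Iic, Ioi_inter_Iic,
    ← intervalIntegral.integral_of_le hδ, integral_rpow (Or.inl hr),
    zero_rpow (by linarith), sub_zero, mul_div_assoc]

lemma integrable_indicator_Iic_rpow_comp_abs {r δ : ℝ} (hr : -1 < r) (hδ : 0 < δ) :
    Integrable fun u ↦ (Iic δ).indicator (· ^ r) |u| := by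
  refine Integrable.of_integral_ne_zero ?_
  rw [integral_indicator_Iic_rpow_comp_abs hr hδ.le]
  have : 0 < r + 1 := by linarith
  positivity

lemma rpow_le_indicator_Iic_rpow_add {r δ x : ℝ} (hr : r ≤ 0) (hδ : 0 < δ) :
    x ^ r ≤ (Iic δ).indicator (· ^ r) x + δ ^ r := by
  by_cases hx : x ≤ δ
  · rw [indicator_of_mem (mem_Iic.mpr hx)]
    exact le_add_of_nonneg_right (rpow_nonneg hδ.le r)
  · rw [indicator_of_notMem (mt mem_Iic.mp hx), zero_add]
    exact rpow_le_rpow_of_nonpos hδ (not_le.mp hx).le hr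

lemma integral_exp_neg_mul_Ioi_zero {a : ℝ} (ha : 0 < a) :
    ∫ v in Ioi 0, exp (-a * v) = a⁻¹ := by
  rw [integral_exp_mul_Ioi (neg_lt_zero.mpr ha), mul_zero, exp_zero, neg_div_neg_eq, one_div]

theorem integral_exp_neg_mul_mul_abs_sub_rpow_le_add {a r δ : ℝ} (ha : 0 < a)
    (hr₁ : -1 < r) (hr₀ : r ≤ 0) (hδ : 0 < δ) (η : ℝ) :
    ∫ v in Ioi 0, exp (-a * v) * |v - η| ^ r ≤ 2 * δ ^ (r + 1) / (r + 1) + δ ^ r / a := by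
  set near : ℝ → ℝ := fun v ↦ (Iic δ).indicator (· ^ r) |v - η|
  have near_nonneg : ∀ v, 0 ≤ near v := fun v ↦
    indicator_apply_nonneg fun _ ↦ rpow_nonneg (abs_nonneg _) r
  have near_int : Integrable near :=
    (integrable_indicator_Iic_rpow_comp_abs hr₁ hδ).comp_sub_right η
  have far_int : IntegrableOn (fun v ↦ δ ^ r * exp (-a * v)) (Ioi 0) :=
    (exp_neg_integrableOn_Ioi 0 ha).const_mul _
  have pointwise : ∀ v ∈ Ioi (0 : ℝ),
      exp (-a * v) * |v - η| ^ r ≤ near v + δ ^ r * exp (-a * v) := by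
    intro v hv
    have hexp : exp (-a * v) ≤ 1 := exp_le_one_iff.mpr (by nlinarith [mem_Ioi.mp hv])
    calc exp (-a * v) * |v - η| ^ r ≤ exp (-a * v) * (near v + δ ^ r) :=
          mul_le_mul_of_nonneg_left (rpow_le_indicator_Iic_rpow_add hr₀ hδ) (exp_nonneg _)
      _ ≤ near v + δ ^ r * exp (-a * v) := by
          nlinarith [near_nonneg v, exp_nonneg (-a * v)]
  calc ∫ v in Ioi 0, exp (-a * v) * |v - η| ^ r
      ≤ ∫ v in Ioi 0, (near v + δ ^ r * exp (-a * v)) :=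
        integral_mono_of_nonneg (ae_of_all _ fun v ↦ by positivity)
          (near_int.integrableOn.add far_int) ((ae_restrict_iff' measurableSet_Ioi).mpr
            (ae_of_all _ pointwise))
    _ = (∫ v in Ioi 0, near v) + δ ^ r * ∫ v in Ioi 0, exp (-a * v) := by
        rw [integral_add near_int.integrableOn far_int, integral_const_mul]
    _ ≤ (∫ v, near v) + δ ^ r * a⁻¹ := by
        rw [integral_exp_neg_mul_Ioi_zero ha]
        exact add_le_add_left (setIntegral_le_integral near_int (ae_of_all _ near_nonneg)) _
    _ = 2 * δ ^ (r + 1) / (r + 1) + δ ^ r / a := by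
        rw [integral_sub_right_eq_self (fun u ↦ (Iic δ).indicator (· ^ r) |u|) η,
          integral_indicator_Iic_rpow_comp_abs hr₁ hδ.le, div_eq_mul_inv (δ ^ r)]

theorem integral_exp_neg_mul_mul_abs_sub_rpow_le {a r : ℝ} (ha : 0 < a)
    (hr₁ : -1 < r) (hr₀ : r ≤ 0) (η : ℝ) :
    ∫ v in Ioi 0, exp (-a * v) * |v - η| ^ r ≤ (2 / (r + 1) + 1) * a ^ (-(r + 1)) := by
  refine (integral_exp_neg_mul_mul_abs_sub_rpow_le_add ha hr₁ hr₀ (inv_pos.mpr ha) η).trans_eq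
    ?_
  rw [inv_rpow ha.le, inv_rpow ha.le, ← rpow_neg ha.le, ← rpow_neg ha.le, div_eq_mul_inv _ a,
    ← rpow_neg_one a, ← rpow_add ha]
  ring_nf

/-- ∫_0^∞ e^{-ctv}/√|v-η| dv ≲ t^{-1/2} uniformly in η ∈ ℝ, for t ≥ 1. -/
theorem stmt12 (c : ℝ) (hc : 0 < c) :
    ∃ C > 0, ∀ (η t : ℝ), 1 ≤ t →
      (∫ v in Set.Ioi (0:ℝ), Real.exp (-c * t * v) / Real.sqrt |v - η|) ≤
        C * t ^ (-(1:ℝ)/2) := by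
  refine ⟨5 * c ^ (-(1:ℝ)/2), by positivity, fun η t ht ↦ ?_⟩
  have ht₀ : 0 < t := one_pos.trans_le ht
  have kernel_eq : ∀ v : ℝ,
      exp (-c * t * v) / √|v - η| = exp (-(c * t) * v) * |v - η| ^ (-(1:ℝ)/2) := fun v ↦ by
    rw [sqrt_eq_rpow, div_eq_mul_inv, ← rpow_neg (abs_nonneg _), neg_mul c, neg_div]
  calc ∫ v in Ioi 0, exp (-c * t * v) / √|v - η|
      = ∫ v in Ioi 0, exp (-(c * t) * v) * |v - η| ^ (-(1:ℝ)/2) := by simp_rw [kernel_eq]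
    _ ≤ (2 / (-(1:ℝ)/2 + 1) + 1) * (c * t) ^ (-(-(1:ℝ)/2 + 1)) :=
        integral_exp_neg_mul_mul_abs_sub_rpow_le (mul_pos hc ht₀) (by norm_num) (by norm_num) η
    _ = 5 * c ^ (-(1:ℝ)/2) * t ^ (-(1:ℝ)/2) := by
        rw [mul_rpow hc.le ht₀.le]
        norm_num
        ring
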